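/- arXiv:2603.03211 — 3 statements merged into one kernel-verified Lean document; each statement's English description precedes it below -/
import Mathlib

section
/- Let Z be a real Hilbert space, B ⊆ Z an open set, and J : B → ℝ a continuously Fréchet differentiable function that is λ-strongly convex on B for some λ > 0, i.e., J(z₂) ≥ J(z₁) + ⟨DJ(z₁), z₂ - z₁⟩ + (λ/2)‖z₂ - z₁‖² for all z₁, z₂ ∈ B. Let Z_ad ⊆ B be closed, convex, nonempty, let z⋆ be the unique minimizer of J over Z_ad, let J_θ : B → ℝ be continuously Fréchet differentiable, and let z† ∈ Z_ad satisfy ⟨DJ_θ(z†), z - z†⟩ ≥ 0 for all z ∈ Z_ad. Then ‖z⋆ - z†‖ ≤ (1/λ)‖DJ(z†) - DJ_θ(z†)‖. -/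
open InnerProductSpace

/-- Optimization error bound for surrogate-driven optimization:
if `J` is `lam`-strongly convex and `C¹` on an open set `B ⊇ Zad` (closed, convex,
nonempty), `zs` minimizes `J` over `Zad`, and `zd ∈ Zad` is a first-order stationary
point of the approximate objective `Jθ`, then
`‖zs - zd‖ ≤ (1/lam) * ‖DJ(zd) - DJθ(zd)‖`. -/
theorem optimization_error_bound
    {Z : Type*} [NormedAddCommGroup Z] [InnerProductSpace ℝ Z] [CompleteSpace Z]
    (B : Set Z) (hB : IsOpen B)
    (J Jθ : Z → ℝ) (J' Jθ' : Z → (Z →L[ℝ] ℝ))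
    (hJdiff : ∀ z ∈ B, HasFDerivAt J (J' z) z)
    (hJ'cont : ContinuousOn J' B)
    (hJθdiff : ∀ z ∈ B, HasFDerivAt Jθ (Jθ' z) z)
    (hJθ'cont : ContinuousOn Jθ' B)
    (lam : ℝ) (hlam : 0 < lam)
    (hsc : ∀ z₁ ∈ B, ∀ z₂ ∈ B,
      J z₂ ≥ J z₁ + J' z₁ (z₂ - z₁) + (lam / 2) * ‖z₂ - z₁‖ ^ 2)
    (Zad : Set Z) (hZad : Zad ⊆ B) (hclosed : IsClosed Zad) (hconv : Convex ℝ Zad)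
    (hne : Zad.Nonempty)
    (zs : Z) (hzs : zs ∈ Zad) (hmin : ∀ z ∈ Zad, J zs ≤ J z)
    (zd : Z) (hzd : zd ∈ Zad)
    (hstat : ∀ z ∈ Zad, 0 ≤ Jθ' zd (z - zd)) :
    ‖zs - zd‖ ≤ (1 / lam) * ‖J' zd - Jθ' zd‖ := by
  -- first-order optimality of zs
  have hvar : 0 ≤ J' zs (zd - zs) := by
    have hmin' : IsLocalMinOn J Zad zs := (isMinOn_iff.mpr hmin).localize
    have hfd : HasFDerivWithinAt J (J' zs) Zad zs :=
      (hJdiff zs (hZad hzs)).hasFDerivWithinAt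
    exact hmin'.hasFDerivWithinAt_nonneg hfd
      (sub_mem_posTangentConeAt_of_segment_subset (hconv.segment_subset hzs hzd))
  -- strong monotonicity
  have h1 := hsc zs (hZad hzs) zd (hZad hzd)
  have h2 := hsc zd (hZad hzd) zs (hZad hzs)
  have hnorm : ‖zs - zd‖ = ‖zd - zs‖ := by rw [norm_sub_rev]
  have hnsq : ‖zs - zd‖ ^ 2 = ‖zd - zs‖ ^ 2 := by rw [hnorm]
  have hmono : lam * ‖zd - zs‖ ^ 2 ≤ J' zd (zd - zs) - J' zs (zd - zs) := by
    have e : J' zd (zs - zd) = -J' zd (zd - zs) := by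
      rw [← map_neg, neg_sub]
    have h3 : lam / 2 * ‖zd - zs‖ ^ 2 + lam / 2 * ‖zd - zs‖ ^ 2 = lam * ‖zd - zs‖ ^ 2 := by
      ring
    have h4 : lam / 2 * ‖zs - zd‖ ^ 2 = lam / 2 * ‖zd - zs‖ ^ 2 := by rw [hnsq]
    linarith
  -- stationarity of zd for Jθ
  have hst : Jθ' zd (zd - zs) ≤ 0 := by
    have := hstat zs hzs
    have e : Jθ' zd (zd - zs) = -Jθ' zd (zs - zd) := by
      rw [← map_neg, neg_sub]
    have h3 : lam / 2 * ‖zd - zs‖ ^ 2 + lam / 2 * ‖zd - zs‖ ^ 2 = lam * ‖zd - zs‖ ^ 2 := by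
      ring
    have h4 : lam / 2 * ‖zs - zd‖ ^ 2 = lam / 2 * ‖zd - zs‖ ^ 2 := by rw [hnsq]
    linarith
  have hkey : lam * ‖zd - zs‖ ^ 2 ≤ (J' zd - Jθ' zd) (zd - zs) := by
    have : (J' zd - Jθ' zd) (zd - zs) = J' zd (zd - zs) - Jθ' zd (zd - zs) := rfl
    linarith
  have hcs : (J' zd - Jθ' zd) (zd - zs) ≤ ‖J' zd - Jθ' zd‖ * ‖zd - zs‖ :=
    (le_abs_self _).trans ((J' zd - Jθ' zd).le_opNorm _)
  rcases eq_or_lt_of_le (norm_nonneg (zd - zs)) with h0 | h0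
  · rw [hnorm, ← h0]
    positivity
  · have hl : lam * ‖zd - zs‖ ≤ ‖J' zd - Jθ' zd‖ := by
      have := hkey.trans hcs
      nlinarith
    calc ‖zs - zd‖ = (lam * ‖zd - zs‖) / lam := by
          rw [hnorm]; field_simp
      _ ≤ ‖J' zd - Jθ' zd‖ / lam := by
          gcongr
      _ = (1 / lam) * ‖J' zd - Jθ' zd‖ := by ring
end

section
/- Under the same hypotheses as the optimization error bound (J λ-strongly convex and C¹ on an open set B containing the closed convex nonempty set Z_ad, z⋆ the unique minimizer of J over Z_ad, z† ∈ Z_ad a first-order stationary point of an approximate C¹ objective J_θ, i.e., ⟨DJ_θ(z†), z - z†⟩ ≥ 0 for all z ∈ Z_ad), the optimality gap satisfies J(z†) - J(z⋆) ≤ (1/(2λ))‖DJ(z†) - DJ_θ(z†)‖². -/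
open InnerProductSpace

/-- Optimization error bound for surrogate-driven optimization:
if `J` is `lam`-strongly convex and `C¹` on an open set `B ⊇ Zad` (closed, convex,
nonempty), `zs` minimizes `J` over `Zad`, and `zd ∈ Zad` is a first-order stationary
point of the approximate objective `Jθ`, then
`‖zs - zd‖ ≤ (1/lam) * ‖DJ(zd) - DJθ(zd)‖`. -/
theorem optimality_gap_bound
    {Z : Type*} [NormedAddCommGroup Z] [InnerProductSpace ℝ Z] [CompleteSpace Z]
    (B : Set Z) (hB : IsOpen B)
    (J Jθ : Z → ℝ) (J' Jθ' : Z → (Z →L[ℝ] ℝ))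
    (hJdiff : ∀ z ∈ B, HasFDerivAt J (J' z) z)
    (hJ'cont : ContinuousOn J' B)
    (hJθdiff : ∀ z ∈ B, HasFDerivAt Jθ (Jθ' z) z)
    (hJθ'cont : ContinuousOn Jθ' B)
    (lam : ℝ) (hlam : 0 < lam)
    (hsc : ∀ z₁ ∈ B, ∀ z₂ ∈ B,
      J z₂ ≥ J z₁ + J' z₁ (z₂ - z₁) + (lam / 2) * ‖z₂ - z₁‖ ^ 2)
    (Zad : Set Z) (hZad : Zad ⊆ B) (hclosed : IsClosed Zad) (hconv : Convex ℝ Zad)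
    (hne : Zad.Nonempty)
    (zs : Z) (hzs : zs ∈ Zad) (hmin : ∀ z ∈ Zad, J zs ≤ J z)
    (zd : Z) (hzd : zd ∈ Zad)
    (hstat : ∀ z ∈ Zad, 0 ≤ Jθ' zd (z - zd)) :
    J zd - J zs ≤ (1 / (2 * lam)) * ‖J' zd - Jθ' zd‖ ^ 2 := by
  have hsc' := hsc zd (hZad hzd) zs (hZad hzs)
  have hst := hstat zs hzs
  have he : (J' zd - Jθ' zd) (zs - zd) = J' zd (zs - zd) - Jθ' zd (zs - zd) := rfl
  have hb : -(‖J' zd - Jθ' zd‖ * ‖zs - zd‖) ≤ (J' zd - Jθ' zd) (zs - zd) := by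
    have h1 := (J' zd - Jθ' zd).le_opNorm (zs - zd)
    rw [Real.norm_eq_abs] at h1
    linarith [neg_abs_le ((J' zd - Jθ' zd) (zs - zd))]
  have hd : (0:ℝ) ≤ ‖zs - zd‖ := norm_nonneg _
  have hnn : (0:ℝ) ≤ ‖J' zd - Jθ' zd‖ := norm_nonneg _
  have key : J zd - J zs ≤ ‖J' zd - Jθ' zd‖ * ‖zs - zd‖ - (lam/2) * ‖zs - zd‖^2 := by
    nlinarith [hsc', hst, hb, he]
  have h2 : 2 * lam * (J zd - J zs) ≤ ‖J' zd - Jθ' zd‖ ^ 2 := by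
    nlinarith [sq_nonneg (‖J' zd - Jθ' zd‖ - lam * ‖zs - zd‖), mul_le_mul_of_nonneg_left key (le_of_lt hlam)]
  rw [div_mul_eq_mul_div, one_mul, le_div_iff₀ (by positivity)]
  linarith
end

section
/- Define the GELU activation σ(x) = x·Φ(x), where Φ is the standard Gaussian CDF, and for θ > 0 define f_abs(x; θ) = (σ(θx) + σ(-θx))/θ. Then f_abs(x;θ) = |x|·(2Φ(θ|x|) - 1) ≥ 0 for all x ∈ ℝ, and for every ε > 0 there exists θ > 0 such that |f_abs(x;θ) - |x|| ≤ ε for all x ∈ ℝ. -/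
open Real

/-- Standard Gaussian cumulative distribution function. -/
noncomputable def gaussPhi (x : ℝ) : ℝ :=
  ∫ t in Set.Iic x, Real.exp (-t ^ 2 / 2) / Real.sqrt (2 * Real.pi)

/-- The GELU activation function `σ(x) = x Φ(x)`. -/
noncomputable def gelu (x : ℝ) : ℝ := x * gaussPhi x

/-- The GELU-based approximation of the absolute value,
`f_abs(x; θ) = (σ(θx) + σ(-θx)) / θ`. -/
noncomputable def fAbs (θ x : ℝ) : ℝ := (gelu (θ * x) + gelu (-(θ * x))) / θ

section Aux

open MeasureTheory Set

/-- The standard Gaussian density. -/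
noncomputable def gaussG (t : ℝ) : ℝ := Real.exp (-t ^ 2 / 2) / Real.sqrt (2 * Real.pi)

lemma gaussG_nonneg (t : ℝ) : 0 ≤ gaussG t := by unfold gaussG; positivity

lemma gaussG_int : Integrable gaussG := by
  have := (integrable_exp_neg_mul_sq (b := (1:ℝ)/2) (by norm_num)).div_const
    (Real.sqrt (2*Real.pi))
  convert this using 2 with t
  unfold gaussG; ring_nf

lemma gaussG_total : ∫ t, gaussG t = 1 := by
  unfold gaussG
  rw [integral_div]
  have : (fun t : ℝ => Real.exp (-t^2/2)) = fun t : ℝ => Real.exp (-(1/2) * t^2) := by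
    funext t; ring_nf
  rw [show (∫ t : ℝ, Real.exp (-t^2/2)) = ∫ t : ℝ, Real.exp (-(1/2)*t^2) by rw [this],
    integral_gaussian]
  rw [div_eq_one_iff_eq (by positivity)]
  rw [show Real.pi / (1/2) = 2 * Real.pi by ring]

lemma gaussPhi_eq (x : ℝ) : gaussPhi x = ∫ t in Iic x, gaussG t := rfl

lemma gaussPhi_nonneg (x : ℝ) : 0 ≤ gaussPhi x := by
  rw [gaussPhi_eq]
  exact setIntegral_nonneg measurableSet_Iic fun t _ => gaussG_nonneg t

lemma gaussPhi_add_neg (x : ℝ) : gaussPhi x + gaussPhi (-x) = 1 := by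
  rw [gaussPhi_eq, gaussPhi_eq]
  have heven : ∀ t : ℝ, gaussG (-t) = gaussG t := by intro t; unfold gaussG; ring_nf
  have h1 : ∫ t in Iic (-x), gaussG t = ∫ t in Ioi x, gaussG t := by
    have := integral_comp_neg_Iic (-x) gaussG
    simp_rw [heven, neg_neg] at this
    exact this
  rw [h1, integral_Iic_eq_integral_Iio, ← gaussG_total,
    ← intervalIntegral.integral_Iio_add_Ici (b := x) gaussG_int.integrableOn
      gaussG_int.integrableOn,
    integral_Ici_eq_integral_Ioi]

lemma gaussPhi_mono : Monotone gaussPhi := by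
  intro a b hab
  rw [gaussPhi_eq, gaussPhi_eq]
  exact setIntegral_mono_set gaussG_int.integrableOn
    (Filter.Eventually.of_forall gaussG_nonneg)
    (HasSubset.Subset.eventuallyLE (Iic_subset_Iic.2 hab))

lemma gaussPhi_zero : gaussPhi 0 = 1/2 := by
  have := gaussPhi_add_neg 0
  rw [neg_zero] at this; linarith

lemma gaussPhi_ge_half {t : ℝ} (ht : 0 ≤ t) : 1/2 ≤ gaussPhi t :=
  gaussPhi_zero ▸ gaussPhi_mono ht

lemma gaussPhi_tail {t : ℝ} (ht : 0 ≤ t) :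
    gaussPhi (-t) ≤ Real.sqrt 2 * Real.exp (-t^2/4) := by
  have hq : Integrable (fun s : ℝ => Real.exp (-s^2/4) / Real.sqrt (2*Real.pi)) := by
    have := (integrable_exp_neg_mul_sq (b := (1:ℝ)/4) (by norm_num)).div_const
      (Real.sqrt (2*Real.pi))
    convert this using 2 with s
    ring_nf
  have step1 : gaussPhi (-t) ≤ ∫ s in Iic (-t),
      Real.exp (-t^2/4) * (Real.exp (-s^2/4) / Real.sqrt (2*Real.pi)) := by
    rw [gaussPhi_eq]
    apply setIntegral_mono_on gaussG_int.integrableOn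
      ((hq.const_mul _).integrableOn) measurableSet_Iic
    intro s hs
    simp only [mem_Iic] at hs
    unfold gaussG
    rw [← mul_div_assoc, ← Real.exp_add]
    apply div_le_div_of_nonneg_right ?_ (by positivity)
    apply Real.exp_le_exp.2
    nlinarith [sq_nonneg (s + t), sq_nonneg (s - t)]
  have step2 : ∫ s in Iic (-t),
      Real.exp (-t^2/4) * (Real.exp (-s^2/4) / Real.sqrt (2*Real.pi))
      ≤ Real.exp (-t^2/4) * ∫ s : ℝ, Real.exp (-s^2/4) / Real.sqrt (2*Real.pi) := by
    rw [integral_const_mul]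
    apply mul_le_mul_of_nonneg_left _ (Real.exp_nonneg _)
    exact setIntegral_le_integral hq (Filter.Eventually.of_forall fun s => by positivity)
  have step3 : ∫ s : ℝ, Real.exp (-s^2/4) / Real.sqrt (2*Real.pi) = Real.sqrt 2 := by
    rw [integral_div]
    have : (∫ s : ℝ, Real.exp (-s^2/4)) = ∫ s : ℝ, Real.exp (-(1/4)*s^2) := by
      congr 1; funext s; ring_nf
    rw [this, integral_gaussian, show Real.pi/(1/4) = 4*Real.pi by ring]
    rw [show (4:ℝ)*Real.pi = 2*(2*Real.pi) by ring, Real.sqrt_mul (by norm_num)]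
    field_simp
  calc gaussPhi (-t) ≤ _ := step1
    _ ≤ _ := step2
    _ = Real.sqrt 2 * Real.exp (-t^2/4) := by rw [step3, mul_comm]

lemma mul_exp_le_two {t : ℝ} (ht : 0 ≤ t) : t * Real.exp (-t^2/4) ≤ 2 := by
  have h := Real.add_one_le_exp (t^2/4)
  rw [show -t^2/4 = -(t^2/4) by ring, Real.exp_neg, mul_inv_le_iff₀' (by positivity)]
  nlinarith [sq_nonneg (t-2)]

lemma mul_gaussPhi_neg_le {t : ℝ} (ht : 0 ≤ t) : t * gaussPhi (-t) ≤ 3 := by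
  have h2 : Real.sqrt 2 ≤ 3/2 := by
    rw [show (3:ℝ)/2 = Real.sqrt ((3/2)^2) by rw [Real.sqrt_sq]; norm_num]
    apply Real.sqrt_le_sqrt; norm_num
  calc t * gaussPhi (-t) ≤ t * (Real.sqrt 2 * Real.exp (-t^2/4)) :=
        mul_le_mul_of_nonneg_left (gaussPhi_tail ht) ht
    _ = Real.sqrt 2 * (t * Real.exp (-t^2/4)) := by ring
    _ ≤ (3/2) * 2 := by
        apply mul_le_mul h2 (mul_exp_le_two ht) (by positivity) (by norm_num)
    _ = 3 := by norm_num

lemma fAbs_eq {θ : ℝ} (hθ : 0 < θ) (x : ℝ) :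
    fAbs θ x = |x| * (2 * gaussPhi (θ * |x|) - 1) := by
  unfold fAbs gelu
  have h := gaussPhi_add_neg (θ * x)
  rcases abs_cases x with ⟨h1, h2⟩ | ⟨h1, h2⟩
  · rw [h1]
    generalize hP : gaussPhi (θ * x) = P at h ⊢
    generalize hQ : gaussPhi (-(θ * x)) = Q at h ⊢
    rw [show Q = 1 - P by linarith]
    field_simp
    ring
  · rw [h1, show θ * -x = -(θ * x) by ring]
    generalize hP : gaussPhi (θ * x) = P at h ⊢
    generalize hQ : gaussPhi (-(θ * x)) = Q at h ⊢
    rw [show Q = 1 - P by linarith]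
    field_simp
    ring

lemma fAbs_unif {θ : ℝ} (hθ : 0 < θ) (x : ℝ) : abs (fAbs θ x - abs x) ≤ 6/θ := by
  have key : fAbs θ x - |x| = -(2/θ) * ((θ * |x|) * gaussPhi (-(θ * |x|))) := by
    rw [fAbs_eq hθ x]
    have h := gaussPhi_add_neg (θ * |x|)
    generalize hP : gaussPhi (θ * |x|) = P at h ⊢
    generalize hQ : gaussPhi (-(θ * |x|)) = Q at h ⊢
    rw [show Q = 1 - P by linarith]
    field_simp
    ring
  rw [key, abs_mul, abs_neg]
  have ht : 0 ≤ θ * |x| := by positivity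
  have hb : (θ * |x|) * gaussPhi (-(θ * |x|)) ≤ 3 := mul_gaussPhi_neg_le ht
  have hbn : 0 ≤ (θ * |x|) * gaussPhi (-(θ * |x|)) :=
    mul_nonneg ht (gaussPhi_nonneg _)
  rw [abs_of_nonneg hbn, abs_of_nonneg (by positivity : (0:ℝ) ≤ 2/θ)]
  calc 2/θ * ((θ * |x|) * gaussPhi (-(θ * |x|))) ≤ 2/θ * 3 :=
        mul_le_mul_of_nonneg_left hb (by positivity)
    _ = 6/θ := by ring

end Aux

/-- The GELU-based absolute value approximation satisfies
`f_abs(x;θ) = |x|(2Φ(θ|x|) - 1) ≥ 0` for all `x`, and for every `ε > 0` there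
exists `θ > 0` such that `|f_abs(x;θ) - |x|| ≤ ε` uniformly on `ℝ`. -/
theorem gelu_abs_approximation :
    (∀ θ : ℝ, 0 < θ → ∀ x : ℝ,
      fAbs θ x = |x| * (2 * gaussPhi (θ * |x|) - 1) ∧ 0 ≤ fAbs θ x) ∧
    (∀ ε : ℝ, 0 < ε → ∃ θ : ℝ, 0 < θ ∧ ∀ x : ℝ, abs (fAbs θ x - abs x) ≤ ε) := by
  constructor
  · intro θ hθ x
    refine ⟨fAbs_eq hθ x, ?_⟩
    rw [fAbs_eq hθ x]
    have h1 : (1:ℝ)/2 ≤ gaussPhi (θ * |x|) :=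
      gaussPhi_ge_half (by positivity)
    have : (0:ℝ) ≤ 2 * gaussPhi (θ * |x|) - 1 := by linarith
    positivity
  · intro ε hε
    refine ⟨6/ε, by positivity, fun x => ?_⟩
    have := fAbs_unif (show (0:ℝ) < 6/ε by positivity) x
    have h6 : 6/(6/ε) = ε := by field_simp
    rw [h6] at this
    exact this
end
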